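/- If p = k/(k+1) then z = k/(k+1) is a double-point degeneracy of the partial-fraction expansion: the root λ_0 = k/(k+1) satisfies A(k/(k+1)) = 0, and the pmf is f_k(n) = (p^k/(k+1)) (2 λ_0^{n-k} + Σ_{j=1}^{k-1} λ_j^{n-k}) for n ≥ k. -/

import Mathlib

open Finset

attribute [local instance] Classical.propDecidable

/-- `hasRunEnd k n ω m` : in the outcome string `ω` of `n` Bernoulli trials, a run of
`k` consecutive successes ends at trial `m` (trials `m-k+1, ..., m` are successes). -/
def hasRunEnd (k n : ℕ) (ω : Fin n → Bool) (m : ℕ) : Prop :=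
  k ≤ m ∧ m ≤ n ∧ ∀ j : Fin n, m - k ≤ (j : ℕ) → (j : ℕ) < m → ω j = true

/-- The first run of `k` consecutive successes is completed exactly at trial `n`. -/
def firstRun (k n : ℕ) (ω : Fin n → Bool) : Prop :=
  hasRunEnd k n ω n ∧ ∀ m < n, ¬ hasRunEnd k n ω m

/-- The pmf of the geometric distribution of order `k`:
`fk k p n = P(N_k = n)` where `N_k` is the waiting time for the first run of `k`
consecutive successes in i.i.d. Bernoulli(`p`) trials; each outcome string contributes
`p^{#successes} (1-p)^{#failures}`. -/
noncomputable def fk (k : ℕ) (p : ℝ) (n : ℕ) : ℝ :=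
  ∑ ω ∈ Finset.univ.filter (fun ω : Fin n → Bool => firstRun k n ω),
    p ^ (Finset.univ.filter (fun i => ω i = true)).card *
      (1 - p) ^ (Finset.univ.filter (fun i => ω i = false)).card

/-!
Put `μ = (p, λ_0, …, λ_{k-1})`. Since `(z - p) A(z) = z^{k+1} - z^k + q p^k` and the `λ_j` are the
`k` roots of `A`, the `μ_i` are the roots of `B(z) = z^{k+1} - z^k + q p^k`. Hence the power sums
`T_d = Σ μ_i^d` satisfy `T_{d+k+1} = T_{d+k} - q p^k T_d`, while Vieta and Newton's identities give
`T_0 = k + 1` and `T_d = 1` for `1 ≤ d ≤ k`.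

Conditioning on the last `k + 1` trials, `f_k(a + k + 1) = q p^k P(no run in a trials)`, which gives
the same recurrence for `f_k(d + k)`, with initial values `p^k, q p^k, …, q p^k`. When
`p = k/(k+1)` we have `q (k + 1) = 1`, so `f_k(d + k) = q p^k T_d`; and `λ_0 = p` makes `p` a double
root of `B`, so `T_d = 2 λ_0^d + Σ_{j≠0} λ_j^d`.
-/

noncomputable def weight (p : ℝ) {m : ℕ} (ω : Fin m → Bool) : ℝ :=
  ∏ i, if ω i then p else 1 - p

noncomputable def probOf (p : ℝ) {m : ℕ} (P : (Fin m → Bool) → Prop) : ℝ :=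
  ∑ ω, if P ω then weight p ω else 0

section probOf

variable {p : ℝ}

theorem fk_eq_probOf (k n : ℕ) : fk k p n = probOf p (firstRun k n) := by
  rw [fk, probOf, sum_filter]
  refine sum_congr rfl fun ω _ => if_congr Iff.rfl ?_ rfl
  rw [weight, prod_ite, prod_const, prod_const]
  simp only [Bool.not_eq_true]

theorem weight_append {a b : ℕ} (u : Fin a → Bool) (v : Fin b → Bool) :
    weight p (Fin.append u v) = weight p u * weight p v := by
  simp [weight, Fin.prod_univ_add]

theorem probOf_or {m : ℕ} {P Q : (Fin m → Bool) → Prop} (h : ∀ ω, ¬ (P ω ∧ Q ω)) :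
    probOf p (fun ω => P ω ∨ Q ω) = probOf p P + probOf p Q := by
  rw [probOf, probOf, probOf, ← sum_add_distrib]
  refine sum_congr rfl fun ω _ => ?_
  by_cases hP : P ω <;> by_cases hQ : Q ω <;> simp_all

theorem probOf_append {a b : ℕ} {P : (Fin (a + b) → Bool) → Prop} {Q : (Fin a → Bool) → Prop}
    {R : (Fin b → Bool) → Prop} (h : ∀ u v, P (Fin.append u v) ↔ Q u ∧ R v) :
    probOf p P = probOf p Q * probOf p R := by
  rw [probOf, probOf, probOf, sum_mul_sum, ← Fintype.sum_prod_type',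
    ← (Fin.appendEquiv a b).sum_comp]
  refine sum_congr rfl fun x _ => ?_
  obtain ⟨u, v⟩ := x
  change (if P (Fin.append u v) then weight p (Fin.append u v) else 0) = _
  rw [if_congr (h u v) (weight_append u v) rfl, ite_zero_mul_ite_zero]

theorem probOf_eq {m : ℕ} (c : Fin m → Bool) : probOf p (· = c) = weight p c := by
  rw [probOf]
  convert Fintype.sum_ite_eq' c (weight p)

theorem probOf_true (m : ℕ) : probOf p (fun _ : Fin m → Bool => True) = 1 := by
  simp only [probOf, if_true, weight]
  convert (Fintype.prod_sum fun (_ : Fin m) (b : Bool) => if b then p else 1 - p).symm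
  simp

end probOf

def noRun (k m : ℕ) (ω : Fin m → Bool) : Prop := ∀ l, ¬ hasRunEnd k m ω l

noncomputable def noRunProb (k : ℕ) (p : ℝ) (m : ℕ) : ℝ := probOf p (noRun k m)

section runs

variable {k : ℕ}

theorem Fin.append_of_lt {α : Sort*} {a b : ℕ} (u : Fin a → α) (v : Fin b → α) (i : Fin (a + b))
    (hi : (i : ℕ) < a) : Fin.append u v i = u ⟨i, hi⟩ :=
  Fin.append_left u v ⟨i, hi⟩

theorem Fin.append_of_le {α : Sort*} {a b : ℕ} (u : Fin a → α) (v : Fin b → α) (i : Fin (a + b))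
    (hi : a ≤ (i : ℕ)) : Fin.append u v i = v ⟨i - a, by omega⟩ := by
  rw [← Fin.append_right u v]
  congr 1
  ext
  simp only [Fin.val_natAdd]
  omega

theorem hasRunEnd_append_iff_of_le {a b l : ℕ} (u : Fin a → Bool) (v : Fin b → Bool)
    (hl : l ≤ a) : hasRunEnd k (a + b) (Fin.append u v) l ↔ hasRunEnd k a u l := by
  refine and_congr_right fun _ => ⟨fun ⟨_, hrun⟩ => ⟨hl, fun j hj hjl => ?_⟩,
    fun ⟨_, hrun⟩ => ⟨by omega, fun j hj hjl => ?_⟩⟩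
  · simpa [Fin.append_left] using hrun (Fin.castAdd b j) hj hjl
  · rw [Fin.append_of_lt u v j (by omega)]
    exact hrun _ hj hjl

theorem noRun_or_firstRun_iff {n : ℕ} (ω : Fin n → Bool) :
    noRun k n ω ∨ firstRun k n ω ↔ ∀ l < n, ¬ hasRunEnd k n ω l := by
  refine ⟨fun h l hl => h.elim (fun h => h l) (fun h => h.2 l hl), fun h => ?_⟩
  by_cases hn : hasRunEnd k n ω n
  · exact Or.inr ⟨hn, h⟩
  · refine Or.inl fun l hrun => ?_
    rcases lt_trichotomy l n with hl | rfl | hl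
    exacts [h l hl hrun, hn hrun, absurd hrun.2.1 (by omega)]

theorem noRun_or_firstRun_append_iff {m : ℕ} (u : Fin m → Bool) (v : Fin 1 → Bool) :
    noRun k (m + 1) (Fin.append u v) ∨ firstRun k (m + 1) (Fin.append u v) ↔ noRun k m u := by
  rw [noRun_or_firstRun_iff]
  refine ⟨fun h l hrun => h l (by have := hrun.2.1; omega)
    ((hasRunEnd_append_iff_of_le u v hrun.2.1).2 hrun), fun h l hl hrun => ?_⟩
  exact h l ((hasRunEnd_append_iff_of_le u v (by omega)).1 hrun)

theorem firstRun_append_iff {a : ℕ} (u : Fin a → Bool) (v : Fin (k + 1) → Bool) :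
    firstRun k (a + (k + 1)) (Fin.append u v) ↔
      noRun k a u ∧ v = fun j => decide (j ≠ 0) := by
  have hv : ∀ (i : Fin (a + (k + 1))) (ha : a ≤ (i : ℕ)),
      Fin.append u v i = v ⟨i - a, by omega⟩ := Fin.append_of_le u v
  constructor
  · rintro ⟨⟨-, -, hlast⟩, hfirst⟩
    have hsucc : ∀ j : Fin (k + 1), j ≠ 0 → v j = true := fun j hj => by
      have hj : 1 ≤ (j : ℕ) := Nat.one_le_iff_ne_zero.2 (Fin.val_ne_iff.2 hj)
      simpa using (hv ⟨a + j, by omega⟩ (by simp)).symm.trans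
        (hlast ⟨a + j, by omega⟩ (by simp; omega) (by simp; omega))
    refine ⟨fun l hrun => hfirst l (by have := hrun.2.1; omega)
      ((hasRunEnd_append_iff_of_le u v hrun.2.1).2 hrun), funext fun j => ?_⟩
    by_cases hj : j = 0
    · subst hj
      refine (Bool.eq_false_iff.2 fun hv0 => hfirst (a + k) (by omega)
        ⟨by omega, by omega, fun i hi hik => ?_⟩).trans (by simp)
      rw [hv i (by omega)]
      by_cases hia : (i : ℕ) = a
      · simpa [hia] using hv0
      · exact hsucc _ (by simp [Fin.ext_iff]; omega)
    · simpa [hj] using hsucc j hj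
  · rintro ⟨hu, rfl⟩
    refine ⟨⟨by omega, le_rfl, fun i hi hik => ?_⟩, fun l hl hrun => ?_⟩
    · rw [hv i (by omega)]
      simp [Fin.ext_iff]
      omega
    · rcases le_or_gt l a with hla | hla
      · exact hu l ((hasRunEnd_append_iff_of_le u _ hla).1 hrun)
      · have := hrun.2.2 ⟨a, by omega⟩ (by simp; omega) (by simp; omega)
        rw [hv ⟨a, by omega⟩ le_rfl] at this
        simp at this

theorem noRunProb_eq_add_fk (p : ℝ) (m : ℕ) :
    noRunProb k p m = noRunProb k p (m + 1) + fk k p (m + 1) := by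
  have hsplit := probOf_append (p := p)
    (P := fun ω => noRun k (m + 1) ω ∨ firstRun k (m + 1) ω) (R := fun _ : Fin 1 → Bool => True)
    fun u v => (noRun_or_firstRun_append_iff u v).trans (and_iff_left trivial).symm
  rw [probOf_true, mul_one, probOf_or (P := noRun k (m + 1)) fun ω h => h.1 _ h.2.1] at hsplit
  rw [noRunProb, noRunProb, fk_eq_probOf, hsplit]

theorem noRunProb_of_lt (p : ℝ) {m : ℕ} (hm : m < k) : noRunProb k p m = 1 := by
  have : noRun k m = fun _ => True := funext fun ω =>
    eq_true fun l hrun => by have := hrun.1; have := hrun.2.1; omega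
  rw [noRunProb, this, probOf_true]

theorem fk_self (p : ℝ) : fk k p k = p ^ k := by
  have : firstRun k k = (· = fun _ => true) := funext fun ω => propext
    ⟨fun h => funext fun j => h.1.2.2 j (by omega) j.isLt,
      fun h => h ▸ ⟨⟨le_rfl, le_rfl, fun _ _ _ => rfl⟩, fun m hm hrun => by
        have := hrun.1; omega⟩⟩
  rw [fk_eq_probOf, this, probOf_eq]
  simp [weight]

theorem fk_add_eq (p : ℝ) (a : ℕ) :
    fk k p (a + (k + 1)) = (1 - p) * p ^ k * noRunProb k p a := by
  rw [fk_eq_probOf, probOf_append (firstRun_append_iff), probOf_eq, noRunProb, mul_comm]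
  simp [weight, Fin.prod_univ_succ]

theorem fk_add_eq_of_le (p : ℝ) {j : ℕ} (hj : 1 ≤ j) (hjk : j ≤ k) :
    fk k p (j + k) = (1 - p) * p ^ k := by
  obtain ⟨i, rfl⟩ := Nat.exists_eq_add_of_le' hj
  rw [show i + 1 + k = i + (k + 1) by ring, fk_add_eq, noRunProb_of_lt p (by omega), mul_one]

theorem fk_add_recurrence (hk : 1 ≤ k) (p : ℝ) (d : ℕ) :
    fk k p (d + k + 1 + k) = fk k p (d + k + k) - (1 - p) * p ^ k * fk k p (d + k) := by
  obtain ⟨a, ha⟩ : ∃ a, d + k = a + 1 := ⟨d + k - 1, by omega⟩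
  rw [ha, show a + 1 + 1 + k = a + 1 + (k + 1) by ring, show a + 1 + k = a + (k + 1) by ring,
    fk_add_eq, fk_add_eq, noRunProb_eq_add_fk p a]
  ring

end runs

open Polynomial

theorem seq_eq_of_recurrence {R : Type*} [Ring R] {N : ℕ} {c : R} {u v : ℕ → R}
    (hu : ∀ n, u (n + N + 1) = u (n + N) - c * u n)
    (hv : ∀ n, v (n + N + 1) = v (n + N) - c * v n) (hinit : ∀ n ≤ N, u n = v n) : u = v := by
  funext n
  induction n using Nat.strong_induction_on with
  | _ n ih =>
    by_cases hn : n ≤ N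
    · exact hinit n hn
    · obtain ⟨m, rfl⟩ : ∃ m, n = m + N + 1 := ⟨n - N - 1, by omega⟩
      rw [hu, hv, ih (m + N) (by omega), ih m (by omega)]

section auxPoly

variable {R : Type*} [CommRing R]

/-- The polynomial `A` of the statement, as a function on any commutative ring; evaluated at
`X : R[X]` with coefficients `C p`, `C q` it is `A` itself. -/
def auxPoly (k : ℕ) (p q z : R) : R := z ^ k - ∑ i ∈ Icc 1 k, q * p ^ (i - 1) * z ^ (k - i)

theorem map_auxPoly {S : Type*} [CommRing S] (f : R →+* S) (k : ℕ) (p q z : R) :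
    f (auxPoly k p q z) = auxPoly k (f p) (f q) (f z) := by
  simp [auxPoly, map_sum]

theorem sub_mul_auxPoly {p q : R} (hpq : p + q = 1) (k : ℕ) (z : R) :
    (z - p) * auxPoly k p q z = z ^ (k + 1) - z ^ k + q * p ^ k := by
  have hsum : ∑ i ∈ Icc 1 k, q * p ^ (i - 1) * z ^ (k - i) =
      q * ∑ i ∈ range k, p ^ i * z ^ (k - 1 - i) := by
    rw [← Ico_add_one_right_eq_Icc, sum_Ico_eq_sum_range, mul_sum]
    refine sum_congr (by simp) fun i _ => ?_
    rw [Nat.add_sub_cancel_left, Nat.sub_sub, add_comm 1 i, mul_assoc]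
  have hgeom := geom_sum₂_mul p z k
  rw [auxPoly, hsum]
  linear_combination q * hgeom - z ^ k * hpq

end auxPoly

section roots

variable {R : Type*} [CommRing R]

theorem degree_auxPoly_tail_lt (k : ℕ) (p q : R) :
    (∑ i ∈ Icc 1 k, C q * C p ^ (i - 1) * X ^ (k - i)).degree < (k : WithBot ℕ) := by
  refine (degree_sum_le _ _).trans_lt <| (Finset.sup_lt_iff (WithBot.bot_lt_coe k)).2 fun i hi => ?_
  rw [← C_pow, ← C_mul]
  refine (degree_C_mul_X_pow_le _ _).trans_lt ?_
  exact WithBot.coe_lt_coe.2 (Nat.sub_lt_of_pos_le (mem_Icc.1 hi).1 (mem_Icc.1 hi).2)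

theorem monic_auxPoly_X (k : ℕ) (p q : R) : (auxPoly k (C p) (C q) X).Monic :=
  monic_X_pow_sub (degree_auxPoly_tail_lt k p q)

theorem natDegree_auxPoly_X [Nontrivial R] (k : ℕ) (p q : R) :
    (auxPoly k (C p) (C q) X).natDegree = k :=
  natDegree_eq_of_degree_eq_some <| (degree_sub_eq_left_of_degree_lt
    ((degree_auxPoly_tail_lt k p q).trans_eq (degree_X_pow k).symm)).trans (degree_X_pow k)

theorem auxPoly_X_eq_prod [IsDomain R] {k : ℕ} {p q : R} {lam : Fin k → R}
    (hinj : Function.Injective lam) (hroot : ∀ j, auxPoly k p q (lam j) = 0) :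
    auxPoly k (C p) (C q) X = ∏ j, (X - C (lam j)) := by
  have hmonic := monic_auxPoly_X k p q
  have hroots : (auxPoly k (C p) (C q) X).roots = (univ.image lam).val := by
    refine roots_eq_of_natDegree_le_card_of_ne_zero (fun z hz => ?_) ?_ hmonic.ne_zero
    · obtain ⟨j, -, rfl⟩ := mem_image.1 hz
      simpa [hroot j] using map_auxPoly (evalRingHom (lam j)) k (C p) (C q) X
    · rw [natDegree_auxPoly_X, card_image_of_injective _ hinj, card_univ, Fintype.card_fin]
  rw [← prod_multiset_X_sub_C_of_monic_of_roots_card_eq hmonic (by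
      rw [hroots, natDegree_auxPoly_X, ← card_def, card_image_of_injective _ hinj, card_univ,
        Fintype.card_fin]),
    hroots, ← prod_eq_multiset_prod, prod_image hinj.injOn]

theorem prod_X_sub_C_cons_eq [IsDomain R] {k : ℕ} {p q : R} (hpq : p + q = 1) {lam : Fin k → R}
    (hinj : Function.Injective lam) (hroot : ∀ j, auxPoly k p q (lam j) = 0) :
    ∏ i, (X - C ((Fin.cons p lam : Fin (k + 1) → R) i)) =
      X ^ (k + 1) - X ^ k + C (q * p ^ k) := by
  rw [Fin.prod_univ_succ]
  simp only [Fin.cons_zero, Fin.cons_succ]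
  rw [← auxPoly_X_eq_prod hinj hroot, sub_mul_auxPoly (by rw [← C_add, hpq, C_1]), C_mul, C_pow]

end roots

section powerSums

variable {ι R : Type*} [Fintype ι] [CommRing R] {N : ℕ} {c : R} {x : ι → R}

theorem pow_succ_sub_pow_add_eq_zero_of_prod
    (hx : ∏ i, (X - C (x i)) = X ^ (N + 1) - X ^ N + C c) (i : ι) :
    x i ^ (N + 1) - x i ^ N + c = 0 := by
  have := congrArg (eval (x i)) hx
  rw [eval_prod, prod_eq_zero (mem_univ i) (by simp)] at this
  simpa using this.symm

theorem sum_pow_recurrence_of_prod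
    (hx : ∏ i, (X - C (x i)) = X ^ (N + 1) - X ^ N + C c) (n : ℕ) :
    ∑ i, x i ^ (n + N + 1) = ∑ i, x i ^ (n + N) - c * ∑ i, x i ^ n := by
  rw [mul_sum, ← sum_sub_distrib]
  refine sum_congr rfl fun i _ => ?_
  linear_combination x i ^ n * pow_succ_sub_pow_add_eq_zero_of_prod hx i

theorem esymm_eq_ite_of_prod (hcard : Fintype.card ι = N + 1)
    (hx : ∏ i, (X - C (x i)) = X ^ (N + 1) - X ^ N + C c) {m : ℕ} (hm : 1 ≤ m) (hmN : m ≤ N) :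
    (univ.val.map x).esymm m = if m = 1 then 1 else 0 := by
  have hvieta := Multiset.prod_X_sub_C_coeff (univ.val.map x) (k := N + 1 - m) (by simp; omega)
  rw [Multiset.map_map, Multiset.card_map, card_val, card_univ, hcard,
    show N + 1 - (N + 1 - m) = m by omega] at hvieta
  change (∏ i, (X - C (x i))).coeff (N + 1 - m) = _ at hvieta
  have hcoeff :
      (X ^ (N + 1) - X ^ N + C c : R[X]).coeff (N + 1 - m) = if m = 1 then -1 else 0 := by
    simp only [coeff_add, coeff_sub, coeff_X_pow, coeff_C]
    split_ifs <;> first | omega | ring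
  rw [hx, hcoeff] at hvieta
  rcases eq_or_ne m 1 with rfl | hm1
  · simp only [if_true, pow_one] at hvieta ⊢
    linear_combination hvieta
  · have hsq : ((-1 : R) ^ m) ^ 2 = 1 := by rw [← pow_mul, mul_comm, pow_mul]; simp
    rw [if_neg hm1] at hvieta ⊢
    linear_combination -(-1) ^ m * hvieta - (univ.val.map x).esymm m * hsq

theorem sum_pow_eq_one_of_esymm
    (h : ∀ m, 1 ≤ m → m ≤ N → (univ.val.map x).esymm m = if m = 1 then 1 else 0) :
    ∀ m, 1 ≤ m → m ≤ N → ∑ i, x i ^ m = 1 := by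
  intro m
  induction m using Nat.strong_induction_on with
  | _ m ih =>
    intro hm hmN
    have hnewton := congrArg (MvPolynomial.aeval x)
      (MvPolynomial.psum_eq_mul_esymm_sub_sum ι R m hm)
    simp only [map_sub, map_mul, map_sum, map_pow, map_neg, map_one, map_natCast,
      MvPolynomial.aeval_esymm_eq_multiset_esymm, MvPolynomial.psum, MvPolynomial.aeval_X]
      at hnewton
    rw [hnewton, h m hm hmN]
    rcases eq_or_lt_of_le hm with rfl | hm2
    · have hempty : {a ∈ antidiagonal 1 | a.1 ∈ Set.Ioo 0 1} = ∅ :=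
        filter_eq_empty_iff.2 fun a _ ha => by simp at ha; omega
      rw [hempty, sum_empty]
      simp
    · rw [if_neg hm2.ne', mul_zero, zero_sub, sum_eq_single_of_mem (1, m - 1) (by simp; omega)]
      · rw [h 1 le_rfl (by omega), ih (m - 1) (by omega) (by omega) (by omega)]
        simp
      · rintro a ha hne
        simp only [mem_filter, HasAntidiagonal.mem_antidiagonal, Set.mem_Ioo] at ha
        rw [h a.1 (by omega) (by omega), if_neg fun h1 => hne (Prod.ext h1 (by omega)),
          mul_zero, zero_mul]

end powerSums

/-- Degenerate case `p = k/(k+1)`: `λ_0 = k/(k+1)` is a root of the auxiliary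
polynomial, and `f_k(n) = (p^k/(k+1)) (2 λ_0^{n-k} + Σ_{j≠0} λ_j^{n-k})` for `n ≥ k`. -/
theorem pmf_root_expansion_degenerate (k : ℕ) (hk : 1 ≤ k) (p q : ℝ)
    (hp : p = (k : ℝ) / (k + 1)) (hq : q = 1 - p) (lam : Fin k → ℂ)
    (hinj : Function.Injective lam)
    (hroot : ∀ j, (lam j) ^ k
      - ∑ i ∈ Finset.Icc 1 k, (q : ℂ) * (p : ℂ) ^ (i - 1) * (lam j) ^ (k - i) = 0)
    (hlam0 : lam ⟨0, hk⟩ = (k : ℂ) / (k + 1)) :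
    (((k : ℂ) / (k + 1)) ^ k
        - ∑ i ∈ Finset.Icc 1 k, (q : ℂ) * (p : ℂ) ^ (i - 1) * ((k : ℂ) / (k + 1)) ^ (k - i)
      = 0) ∧
      ∀ n, k ≤ n → (fk k p n : ℂ) = (p : ℂ) ^ k / (k + 1) *
        (2 * (lam ⟨0, hk⟩) ^ (n - k)
          + ∑ j ∈ Finset.univ \ {(⟨0, hk⟩ : Fin k)}, (lam j) ^ (n - k)) := by
  refine ⟨hlam0 ▸ hroot ⟨0, hk⟩, fun n hn => ?_⟩
  have hpq : (p : ℂ) + q = 1 := by rw [hq]; push_cast; ring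
  have hqk : (q : ℂ) * (k + 1) = 1 := by rw [hq, hp]; push_cast; field_simp; ring
  have hlam0p : lam ⟨0, hk⟩ = p := by rw [hlam0, hp]; push_cast; rfl
  set μ : Fin (k + 1) → ℂ := Fin.cons (p : ℂ) lam
  have hprod := prod_X_sub_C_cons_eq hpq hinj hroot
  have hpow := sum_pow_eq_one_of_esymm fun m => esymm_eq_ite_of_prod (by simp) hprod
  have hfk : (fun d => (fk k p (d + k) : ℂ)) = fun d => p ^ k * q * ∑ i, μ i ^ d := by
    refine seq_eq_of_recurrence (N := k) (c := (q : ℂ) * p ^ k) (fun d => ?_) (fun d => ?_)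
      fun d hd => ?_
    · rw [fk_add_recurrence hk, ← hq]
      push_cast
      ring
    · rw [sum_pow_recurrence_of_prod hprod]
      ring
    · rcases Nat.eq_zero_or_pos d with rfl | hd0
      · simp only [zero_add, fk_self, pow_zero, sum_const, card_univ, Fintype.card_fin]
        push_cast
        linear_combination -(p : ℂ) ^ k * hqk
      · rw [fk_add_eq_of_le p hd0 hd, ← hq, hpow d hd0 hd]
        push_cast
        ring
  obtain ⟨d, rfl⟩ := Nat.exists_eq_add_of_le' hn
  rw [congrFun hfk d, Nat.add_sub_cancel, Fin.sum_univ_succ,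
    sum_eq_add_sum_sdiff_singleton_of_mem (mem_univ ⟨0, hk⟩)]
  simp only [μ, Fin.cons_zero, Fin.cons_succ, hlam0p]
  field_simp
  linear_combination ((p : ℂ) ^ k * (2 * p ^ d + ∑ j ∈ univ \ {⟨0, hk⟩}, lam j ^ d)) * hqk
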